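/- For every x ∈ B̄(a,ρ), H(x) is a subgradient of f at x: for every y ∈ B̄(a,ρ), f(y) ≥ f(x) + ⟨H(x), y − x⟩. -/

import Mathlib

open MeasureTheory Metric
open scoped RealInnerProductSpace

/-!
For each `p`, the unit vector `‖x - p‖⁻¹ • (x - p)` (taken to be `0` when `p = x`) is a
subgradient of the convex function `z ↦ ‖z - p‖` at `x`. Integrating these pointwise
subgradient inequalities against `μ` gives the claim; the only analytic input is that all
integrands are integrable, which holds because `μ` is a finite measure concentrated on a ball.
-/

section Normed

variable {E : Type*} [NormedAddCommGroup E]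

theorem norm_inv_norm_smul_le_one [NormedSpace ℝ E] (w : E) : ‖‖w‖⁻¹ • w‖ ≤ 1 := by
  rcases eq_or_ne w 0 with rfl | hw
  · simp
  · exact (norm_smul_inv_norm hw).le

variable [MeasurableSpace E] {μ : Measure E} [IsFiniteMeasure μ]

theorem integrable_norm_sub_of_ae_mem_ball [OpensMeasurableSpace E] {a : E} {ρ : ℝ}
    (h : ∀ᵐ p ∂μ, p ∈ ball a ρ) (z : E) : Integrable (fun p => ‖z - p‖) μ :=
  Integrable.of_bound (continuous_const.sub continuous_id).norm.aestronglyMeasurable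
    (‖z - a‖ + ρ) <| h.mono fun p hp => by
      have hap : ‖a - p‖ < ρ := by rwa [mem_ball', dist_eq_norm] at hp
      rw [norm_norm]
      linarith [norm_sub_le_norm_sub_add_norm_sub z a p]

theorem integrable_inv_norm_smul_sub [NormedSpace ℝ E] [BorelSpace E] [SecondCountableTopology E]
    (x : E) : Integrable (fun p => ‖x - p‖⁻¹ • (x - p)) μ :=
  Integrable.of_bound (by fun_prop) 1 (.of_forall fun p => norm_inv_norm_smul_le_one (x - p))

end Normed

section InnerProductSpace

variable {E : Type*} [NormedAddCommGroup E] [InnerProductSpace ℝ E]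

theorem norm_add_inner_inv_norm_smul_sub_le (w v : E) : ‖w‖ + ⟪‖w‖⁻¹ • w, v - w⟫ ≤ ‖v‖ := by
  have hself : ⟪‖w‖⁻¹ • w, w⟫ = ‖w‖ := by
    rw [real_inner_smul_left, real_inner_self_eq_norm_mul_norm, ← mul_assoc, inv_mul_mul_self]
  calc ‖w‖ + ⟪‖w‖⁻¹ • w, v - w⟫ = ⟪‖w‖⁻¹ • w, v⟫ := by rw [inner_sub_right, hself]; ring
    _ ≤ ‖‖w‖⁻¹ • w‖ * ‖v‖ := real_inner_le_norm _ _
    _ ≤ ‖v‖ := mul_le_of_le_one_left (norm_nonneg _) (norm_inv_norm_smul_le_one w)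

theorem integral_norm_sub_add_inner_le [CompleteSpace E] [MeasurableSpace E] [BorelSpace E]
    [SecondCountableTopology E] {μ : Measure E} [IsFiniteMeasure μ] {x y : E}
    (hx : Integrable (fun p => ‖x - p‖) μ) (hy : Integrable (fun p => ‖y - p‖) μ) :
    ∫ p, ‖x - p‖ ∂μ + ⟪∫ p, ‖x - p‖⁻¹ • (x - p) ∂μ, y - x⟫ ≤ ∫ p, ‖y - p‖ ∂μ := by
  have hu := integrable_inv_norm_smul_sub (μ := μ) x
  rw [real_inner_comm, ← integral_inner hu, ← integral_add hx (hu.const_inner (y - x))]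
  refine integral_mono (hx.add (hu.const_inner (y - x))) hy fun p => ?_
  have := norm_add_inner_inv_norm_smul_sub_le (x - p) (y - p)
  rwa [sub_sub_sub_cancel_right, real_inner_comm] at this

end InnerProductSpace

theorem stmt11_general {n : ℕ} (a : EuclideanSpace ℝ (Fin n)) (ρ : ℝ)
    (μ : Measure (EuclideanSpace ℝ (Fin n))) [IsProbabilityMeasure μ]
    (hsupp : {x : EuclideanSpace ℝ (Fin n) | ∀ U ∈ nhds x, 0 < μ U} ⊆ ball a ρ)
    (f : EuclideanSpace ℝ (Fin n) → ℝ)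
    (hf : ∀ x, f x = ∫ p, ‖x - p‖ ∂μ)
    (H : EuclideanSpace ℝ (Fin n) → EuclideanSpace ℝ (Fin n))
    (hH : ∀ x, H x = ∫ p in ({x}ᶜ : Set (EuclideanSpace ℝ (Fin n))), ‖x - p‖⁻¹ • (x - p) ∂μ) :
    ∀ x ∈ closedBall a ρ, ∀ y ∈ closedBall a ρ, f y ≥ f x + ⟪H x, y - x⟫ := by
  intro x _ y _
  have hae : ∀ᵐ p ∂μ, p ∈ ball a ρ :=
    Filter.mem_of_superset Measure.support_mem_ae
      fun p hp => hsupp ((Measure.mem_support_iff_forall p).1 hp)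
  have hHx : H x = ∫ p, ‖x - p‖⁻¹ • (x - p) ∂μ := by
    rw [hH]
    exact setIntegral_eq_integral_of_forall_compl_eq_zero
      fun p hp => by rw [Set.notMem_compl_iff.1 hp]; simp
  rw [hf, hf, hHx, ge_iff_le]
  exact integral_norm_sub_add_inner_le (integrable_norm_sub_of_ae_mem_ball hae x)
    (integrable_norm_sub_of_ae_mem_ball hae y)

/-- Euclidean case of Lemma 4.2. For every `x ∈ B̄(a,ρ)`, `H x` is a
subgradient of `f` at `x`: for every `y ∈ B̄(a,ρ)`, `f y ≥ f x + ⟪H x, y - x⟫`. -/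
theorem stmt11 {n : ℕ} (hn : 1 ≤ n) (a : EuclideanSpace ℝ (Fin n)) (ρ : ℝ) (hρ : 0 < ρ)
    (μ : Measure (EuclideanSpace ℝ (Fin n))) [IsProbabilityMeasure μ]
    (hsupp : {x : EuclideanSpace ℝ (Fin n) | ∀ U ∈ nhds x, 0 < μ U} ⊆ ball a ρ)
    (f : EuclideanSpace ℝ (Fin n) → ℝ)
    (hf : ∀ x, f x = ∫ p, ‖x - p‖ ∂μ)
    (H : EuclideanSpace ℝ (Fin n) → EuclideanSpace ℝ (Fin n))
    (hH : ∀ x, H x = ∫ p in ({x}ᶜ : Set (EuclideanSpace ℝ (Fin n))), ‖x - p‖⁻¹ • (x - p) ∂μ) :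
    ∀ x ∈ closedBall a ρ, ∀ y ∈ closedBall a ρ, f y ≥ f x + ⟪H x, y - x⟫ :=
  stmt11_general a ρ μ hsupp f hf H hH
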